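/- A pair (i,j) of integers is attainable as consecutive values (s(n), s(n+1)) = (i,j) for some n ≥ 0 if and only if one of the following holds: (a) i > 0 and -i ≤ j ≤ i - 1; (b) j ≥ 1 and 1 - j ≤ i ≤ j + 1 and i ≢ j (mod 2); (c) j ≤ -2 and j + 2 ≤ i ≤ -j - 2 and i ≡ j (mod 2). -/
import Mathlib

def s : ℕ → ℤ
  | 0 => 0
  | n + 1 =>
    if (n + 1) % 2 = 0 then -s ((n + 1) / 2)
    else s (n / 2) + 1
decreasing_by all_goals omega

lemma s_even (m : ℕ) : s (2*m) = -s m := by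
  match m with
  | 0 => simp [s]
  | k+1 =>
    rw [show 2*(k+1) = (2*k+1)+1 by ring, s]
    have h1 : (2*k+1+1) % 2 = 0 := by omega
    have h2 : (2*k+1+1) / 2 = k+1 := by omega
    simp [h1, h2]

lemma s_odd (m : ℕ) : s (2*m+1) = s m + 1 := by
  rw [s]
  have h1 : ¬ (2*m+1) % 2 = 0 := by omega
  have h2 : (2*m) / 2 = m := by omega
  simp [h1, h2]

/-- The invariant satisfied by all consecutive pairs. -/
lemma s_forward (n : ℕ) : (1 ≤ s n + s (n+1) ∧ (s n + s (n+1)) % 2 = 1) ∨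
    (2 ≤ s n - s (n+1) ∧ (s n - s (n+1)) % 2 = 0) := by
  induction n using Nat.strong_induction_on with
  | _ n ih =>
    rcases Nat.even_or_odd n with ⟨m, hm⟩ | ⟨m, hm⟩
    · rw [show n = 2*m by omega, show 2*m+1 = 2*m+1 from rfl, s_even, s_odd]
      left; omega
    · have h := ih m (by omega)
      rw [show n = 2*m+1 by omega, show 2*m+1+1 = 2*(m+1) by ring, s_odd, s_even]
      omega

lemma s_step {a b : ℤ} (h : ∃ n, s n = a ∧ s (n+1) = b) :
    ∃ n, s n = a + 1 ∧ s (n+1) = -b := by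
  obtain ⟨n, h1, h2⟩ := h
  exact ⟨2*n+1, by rw [s_odd, h1],
    by rw [show 2*n+1+1 = 2*(n+1) by ring, s_even, h2]⟩

lemma s_step2 (k : ℕ) : ∀ a b : ℤ, (∃ n, s n = a ∧ s (n+1) = b) →
    ∃ n, s n = a + 2*k ∧ s (n+1) = b := by
  induction k with
  | zero => simp
  | succ k ih =>
    intro a b h
    obtain ⟨n, h1, h2⟩ := ih (a+1+1) (- -b) (s_step (s_step h))
    exact ⟨n, by rw [h1]; push_cast; ring, by rw [h2]; ring⟩

lemma s_surj (v : ℤ) : ∃ n, s n = v := by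
  have hnat : ∀ k : ℕ, ∃ n, s n = (k:ℤ) := by
    intro k
    induction k with
    | zero => exact ⟨0, by simp [s]⟩
    | succ k ih =>
      obtain ⟨n, h⟩ := ih
      exact ⟨2*n+1, by rw [s_odd, h]; push_cast; ring⟩
  rcases le_or_gt 0 v with hv | hv
  · obtain ⟨n, h⟩ := hnat v.toNat
    exact ⟨n, by rwa [Int.toNat_of_nonneg hv] at h⟩
  · obtain ⟨n, h⟩ := hnat (-v).toNat
    refine ⟨2*n, ?_⟩
    rw [s_even, h, Int.toNat_of_nonneg (by omega)]
    ring

lemma s_base (v : ℤ) : ∃ n, s n = -v ∧ s (n+1) = v + 1 := by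
  obtain ⟨m, hm⟩ := s_surj v
  exact ⟨2*m, by rw [s_even, hm], by rw [s_odd, hm]⟩

theorem stmt11 (i j : ℤ) :
    (∃ n : ℕ, s n = i ∧ s (n + 1) = j) ↔
      (0 < i ∧ -i ≤ j ∧ j ≤ i - 1) ∨
      (1 ≤ j ∧ 1 - j ≤ i ∧ i ≤ j + 1 ∧ ¬ i ≡ j [ZMOD 2]) ∨
      (j ≤ -2 ∧ j + 2 ≤ i ∧ i ≤ -j - 2 ∧ i ≡ j [ZMOD 2]) := by
  have hmod : i ≡ j [ZMOD 2] ↔ i % 2 = j % 2 := Iff.rfl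
  rw [hmod]
  constructor
  · rintro ⟨n, h1, h2⟩
    have := s_forward n
    rw [h1, h2] at this
    omega
  · intro h
    have hC : (1 ≤ i + j ∧ (i + j) % 2 = 1) ∨ (2 ≤ i - j ∧ (i - j) % 2 = 0) := by omega
    rcases hC with ⟨h1, h2⟩ | ⟨h1, h2⟩
    · obtain ⟨n, hn1, hn2⟩ := s_step2 ((i+j-1)/2).toNat (1-j) j
        (by simpa using s_base (j-1))
      refine ⟨n, ?_, hn2⟩
      rw [hn1, Int.toNat_of_nonneg (by omega)]
      omega
    · obtain ⟨n, hn1, hn2⟩ := s_step2 ((i-j-2)/2).toNat (1+j+1) j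
        (by have := s_step (a := 1+j) (b := -j) (by simpa using s_base (-j-1)); simpa using this)
      refine ⟨n, ?_, hn2⟩
      rw [hn1, Int.toNat_of_nonneg (by omega)]
      omega
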